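/- Let G be a connected locally finite simple graph and let xy be an edge of G with d(x) = 2 such that x and y have a common neighbor. Then κ(x,y) ≥ 4/d(y) − 1/2. -/
import Mathlib


open scoped BigOperators

namespace LLY

variable {V : Type*}

/-- Degree of a vertex (as `Nat.card` of its neighbor set; agrees with the usual
degree in a locally finite graph). -/
noncomputable def deg (G : SimpleGraph V) (u : V) : ℕ := Nat.card (G.neighborSet u)

/-- `G` is locally finite. -/
def LocFin (G : SimpleGraph V) : Prop := ∀ v : V, (G.neighborSet v).Finite

/-- `f` is 1-Lipschitz with respect to the graph distance of `G`. -/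
def Lip1 (G : SimpleGraph V) (f : V → ℝ) : Prop :=
  ∀ a b : V, |f a - f b| ≤ (G.dist a b : ℝ)

/-- The (normalized) graph Laplacian `Δf(u) = (1/d(u)) ∑_{v ∈ N(u)} (f v - f u)`. -/
noncomputable def lap (G : SimpleGraph V) (f : V → ℝ) (u : V) : ℝ :=
  (1 / (deg G u : ℝ)) * ∑ᶠ v ∈ G.neighborSet u, (f v - f u)

/-- The gradient `∇_{xy} f = (f x - f y)/d(x,y)`. -/
noncomputable def grad (G : SimpleGraph V) (f : V → ℝ) (x y : V) : ℝ :=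
  (f x - f y) / (G.dist x y : ℝ)

/-- Lin–Lu–Yau curvature of the pair `{x,y}` (limit-free Münch–Wojciechowski form):
`κ(x,y) = inf { ∇_{xy} Δf : f 1-Lipschitz, ∇_{yx} f = 1 }`. -/
noncomputable def kappa (G : SimpleGraph V) (x y : V) : ℝ :=
  sInf {k : ℝ | ∃ f : V → ℝ, Lip1 G f ∧ grad G f y x = 1 ∧ k = grad G (lap G f) x y}

end LLY

open LLY in
lemma lip_adj_bound {V : Type*} {G : SimpleGraph V} {f : V → ℝ} (hf : Lip1 G f)
    {a b : V} (hab : G.Adj a b) : |f a - f b| ≤ 1 := by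
  have := hf a b
  rw [SimpleGraph.dist_eq_one_iff_adj.mpr hab] at this
  exact_mod_cast this

open LLY in
lemma key_bound {V : Type*} (G : SimpleGraph V) (hfin : LocFin G) (x y z : V)
    (hxy : G.Adj x y) (hzx : G.Adj x z) (hzy : G.Adj y z)
    (hNx : G.neighborSet x = {y, z}) (hdx : deg G x = 2)
    (f : V → ℝ) (hf : Lip1 G f) (hfy : f y - f x = 1) :
    lap G f x - lap G f y ≥ 4 / (deg G y : ℝ) - 1 / 2 := by
  classical
  have hyz : y ≠ z := hzy.ne
  have hxz : x ≠ z := hzx.ne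
  -- a = f z - f x ∈ [0, 1]
  set a : ℝ := f z - f x with ha
  have hzx1 : |f z - f x| ≤ 1 := lip_adj_bound hf hzx.symm
  have hzy1 : |f z - f y| ≤ 1 := lip_adj_bound hf hzy.symm
  have ha0 : 0 ≤ a := by
    have := abs_le.mp hzy1
    have h1 := this.1
    nlinarith [hfy]
  have ha1 : a ≤ 1 := (abs_le.mp hzx1).2
  -- lap at x
  have hlapx : lap G f x = (1 / 2) * (1 + a) := by
    rw [lap, hNx, finsum_mem_pair hyz, hdx, hfy, ha]
    norm_num
  -- lap at y
  set s : Finset V := (hfin y).toFinset with hs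
  have hmem : ∀ w, w ∈ s ↔ G.Adj y w := by
    intro w; simp [hs, Set.Finite.mem_toFinset]
  have hxs : x ∈ s := (hmem x).mpr hxy.symm
  have hzs : z ∈ s := (hmem z).mpr hzy
  have hdeg : deg G y = s.card := by
    rw [deg, Nat.card_coe_set_eq, Set.ncard_eq_toFinset_card _ (hfin y)]
  have hdy2 : 2 ≤ s.card := by
    have : ({x, z} : Finset V) ⊆ s := by
      intro w hw
      rcases Finset.mem_insert.mp hw with h | h
      · exact h ▸ hxs
      · exact (Finset.mem_singleton.mp h) ▸ hzs
    calc 2 = ({x, z} : Finset V).card := by rw [Finset.card_insert_of_notMem (by simpa using hxz), Finset.card_singleton]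
    _ ≤ s.card := Finset.card_le_card this
  have hzse : z ∈ s.erase x := Finset.mem_erase.mpr ⟨fun h => hxz h.symm, hzs⟩
  have hsum : ∑ w ∈ s, (f w - f y)
      = (f x - f y) + ((f z - f y) + ∑ w ∈ (s.erase x).erase z, (f w - f y)) := by
    rw [← Finset.add_sum_erase _ _ hxs, ← Finset.add_sum_erase _ _ hzse]
  have hrest : ∑ w ∈ (s.erase x).erase z, (f w - f y)
      ≤ ((s.erase x).erase z).card • (1 : ℝ) := by
    apply Finset.sum_le_card_nsmul
    intro w hw
    have hws : w ∈ s := Finset.mem_of_mem_erase (Finset.mem_of_mem_erase hw)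
    have := (abs_le.mp (lip_adj_bound hf ((hmem w).mp hws).symm)).2
    linarith
  have hcard : ((s.erase x).erase z).card = s.card - 2 := by
    rw [Finset.card_erase_of_mem hzse, Finset.card_erase_of_mem hxs]
    omega
  have hcardR : (((s.erase x).erase z).card : ℝ) = (s.card : ℝ) - 2 := by
    rw [hcard, Nat.cast_sub hdy2]; norm_num
  set D : ℝ := (s.card : ℝ) with hD
  have hD2 : (2 : ℝ) ≤ D := by rw [hD]; exact_mod_cast hdy2
  have hD0 : (0 : ℝ) < D := by linarith
  have hSle : ∑ w ∈ s, (f w - f y) ≤ D - 4 + a := by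
    rw [hsum]
    have := abs_le.mp hzy1
    have h1 : f x - f y = -1 := by linarith [hfy]
    have h2 : f z - f y = a - 1 := by rw [ha]; linarith [hfy]
    rw [h1, h2]
    rw [nsmul_eq_mul, hcardR] at hrest
    linarith
  have hlapy : lap G f y = (1 / D) * ∑ w ∈ s, (f w - f y) := by
    rw [lap, hdeg]
    congr 1
    have : G.neighborSet y = ↑s := (Set.Finite.coe_toFinset (hfin y)).symm
    rw [this, finsum_mem_coe_finset]
  have hlapy_le : lap G f y ≤ (D - 4 + a) / D := by
    rw [hlapy]
    calc 1 / D * ∑ w ∈ s, (f w - f y) ≤ 1 / D * (D - 4 + a) :=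
          mul_le_mul_of_nonneg_left hSle (by positivity)
      _ = (D - 4 + a) / D := by ring
  have hdegy : (deg G y : ℝ) = D := by rw [hdeg]
  rw [hdegy, hlapx]
  have key : (1 / 2) * (1 + a) - (D - 4 + a) / D ≥ 4 / D - 1 / 2 := by
    have h1 : (D - 4 + a) / D = 1 - 4 / D + a / D := by field_simp
    have h2 : a / D ≤ a / 2 := by
      rw [div_le_div_iff₀ hD0 two_pos]
      nlinarith [mul_nonneg ha0 (by linarith : (0:ℝ) ≤ D - 2)]
    rw [ge_iff_le, h1]
    linarith
  linarith [hlapy_le]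

open LLY in
/-- If `xy` is an edge with `d(x) = 2` and `x, y` have a common
neighbor, then `κ(x,y) ≥ 4/d(y) - 1/2`. -/
theorem curv_deg_two_common_neighbor {V : Type*} (G : SimpleGraph V)
    (hconn : G.Connected) (hfin : LocFin G) (x y : V) (hxy : G.Adj x y)
    (hdx : deg G x = 2)
    (hcommon : (G.neighborSet x ∩ G.neighborSet y).Nonempty) :
    kappa G x y ≥ 4 / (deg G y : ℝ) - 1 / 2 := by
  obtain ⟨z, hzx', hzy'⟩ := hcommon
  have hzx : G.Adj x z := hzx'
  have hzy : G.Adj y z := hzy'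
  have hyz : y ≠ z := hzy.ne
  have hdxy : G.dist x y = 1 := SimpleGraph.dist_eq_one_iff_adj.mpr hxy
  have hdyx : G.dist y x = 1 := SimpleGraph.dist_eq_one_iff_adj.mpr hxy.symm
  -- N(x) = {y, z}
  have hNx : G.neighborSet x = {y, z} := by
    symm
    apply Set.eq_of_subset_of_ncard_le
    · intro w hw
      rcases hw with h | h
      · subst h; simpa using hxy
      · rw [Set.mem_singleton_iff.mp h]; simpa using hzx
    · have h1 : (G.neighborSet x).ncard = 2 := by
        rw [← Nat.card_coe_set_eq]; exact hdx
      rw [h1, Set.ncard_pair hyz]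
    · exact hfin x
  rw [kappa]
  apply le_csInf
  · -- nonempty: the distance function from x
    refine ⟨grad G (lap G (fun v => (G.dist x v : ℝ))) x y,
      (fun v => (G.dist x v : ℝ)), ?_, ?_, rfl⟩
    · intro a b
      rw [abs_sub_le_iff]
      constructor
      · have h := hconn.dist_triangle (u := x) (v := b) (w := a)
        have h2 : G.dist b a = G.dist a b := SimpleGraph.dist_comm
        rw [h2] at h
        have := (Nat.cast_le (α := ℝ)).mpr h
        push_cast at this
        linarith
      · have h := hconn.dist_triangle (u := x) (v := a) (w := b)
        have := (Nat.cast_le (α := ℝ)).mpr h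
        push_cast at this
        linarith
    · rw [grad, hdyx, hdxy, SimpleGraph.dist_self]
      norm_num
  · rintro k ⟨f, hf, hgrad, rfl⟩
    have hfy : f y - f x = 1 := by
      rw [grad, hdyx] at hgrad
      push_cast at hgrad
      linarith [hgrad]
    have := key_bound G hfin x y z hxy hzx hzy hNx hdx f hf hfy
    rw [grad, hdxy]
    push_cast
    rw [div_one]
    linarith
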